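/- arXiv:0909.1266 — 3 statements merged into one kernel-verified Lean document; each statement's English description precedes it below -/
import Mathlib

section
/- For real μ > 3 and A ≥ 1, the identity ∑_{k≥1} (1 - k²/A²)₊^μ = (1/(A^{2μ} B(4, μ-3))) · ∫₀^{A²-1} τ^{μ-4} (A² - τ)³ ∑_{k≥1} (1 - k²/(A²-τ))₊³ dτ holds, where B is the Euler Beta function. -/
open Real MeasureTheory

/-- Euler Beta function `B(α,β) = ∫₀¹ s^(α-1) (1-s)^(β-1) ds`. -/
noncomputable def eulerBeta (a b : ℝ) : ℝ := ∫ s in (0:ℝ)..1, s ^ (a - 1) * (1 - s) ^ (b - 1)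

/-!
Write `m = (k+1)²` and `x = A² - τ`. Since `x³ (1 - m/x)₊³ = ((A² - m) - τ)₊³`, the integral
on the right splits, term by term, into the integrals `∫₀^{A²-1} τ^{μ-4} (b - τ)₊³ dτ` with
`b = A² - m ≤ A² - 1`. The substitution `τ = b s` turns each into `b₊^μ B(μ-3, 4)`, and
`b₊^μ = A^{2μ} (1 - m/A²)₊^μ`. All sums are finite, since only `k + 1 ≤ A` contributes.
-/

lemma eulerBeta_comm (a b : ℝ) : eulerBeta a b = eulerBeta b a := by
  have hreflect := intervalIntegral.integral_comp_sub_left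
    (fun s => s ^ (b - 1) * (1 - s) ^ (a - 1)) (1 : ℝ) (a := 0) (b := 1)
  norm_num at hreflect
  simp only [eulerBeta, ← hreflect, mul_comm]

lemma eulerBeta_natCast_add_one_pos {a : ℝ} (ha : 0 < a) (n : ℕ) : 0 < eulerBeta a (n + 1) := by
  unfold eulerBeta
  simp only [add_sub_cancel_right, rpow_natCast]
  refine intervalIntegral.intervalIntegral_pos_of_pos_on ?_ (fun s hs => ?_) zero_lt_one
  · exact (intervalIntegral.intervalIntegrable_rpow' (by linarith)).mul_continuousOn
      ((continuous_const.sub continuous_id).pow n).continuousOn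
  · exact mul_pos (rpow_pos_of_pos hs.1 _) (pow_pos (sub_pos.2 hs.2) n)

lemma integral_rpow_mul_pow_sub (p : ℝ) (n : ℕ) {b : ℝ} (hb : 0 < b) :
    ∫ τ in (0:ℝ)..b, τ ^ p * (b - τ) ^ n = b ^ (p + n + 1) * eulerBeta (p + 1) (n + 1) := by
  have hscale : Set.EqOn (fun s => (b * s) ^ p * (b - b * s) ^ n)
      (fun s => b ^ (p + n) * (s ^ (p + 1 - 1) * (1 - s) ^ ((n : ℝ) + 1 - 1)))
      (Set.uIcc 0 1) := by
    intro s hs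
    rw [Set.uIcc_of_le zero_le_one] at hs
    simp only [add_sub_cancel_right, rpow_natCast]
    rw [mul_rpow hb.le hs.1, rpow_add hb, rpow_natCast, ← mul_one_sub, mul_pow]
    ring
  calc ∫ τ in (0:ℝ)..b, τ ^ p * (b - τ) ^ n
      = b * ∫ s in (0:ℝ)..1, (b * s) ^ p * (b - b * s) ^ n := by
        rw [intervalIntegral.integral_comp_mul_left (fun τ => τ ^ p * (b - τ) ^ n) hb.ne',
          smul_eq_mul, mul_inv_cancel_left₀ hb.ne', mul_zero, mul_one]
    _ = b ^ (p + n + 1) * eulerBeta (p + 1) (n + 1) := by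
        rw [intervalIntegral.integral_congr hscale, intervalIntegral.integral_const_mul,
          ← mul_assoc, rpow_add_one hb.ne', mul_comm b]
        rfl

lemma intervalIntegrable_rpow_mul_max_sub_pow {p : ℝ} (hp : -1 < p) (n : ℕ) (b c d : ℝ) :
    IntervalIntegrable (fun τ => τ ^ p * (max (b - τ) 0) ^ n) volume c d :=
  (intervalIntegral.intervalIntegrable_rpow' hp).mul_continuousOn
    (((continuous_const.sub continuous_id).max continuous_const).pow n).continuousOn

lemma integral_rpow_mul_max_sub_pow {p : ℝ} (hp : -1 < p) {n : ℕ} (hn : n ≠ 0) {b c : ℝ}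
    (hbc : b ≤ c) :
    ∫ τ in (0:ℝ)..c, τ ^ p * (max (b - τ) 0) ^ n
      = (max b 0) ^ (p + n + 1) * eulerBeta (p + 1) (n + 1) := by
  have hvanish : ∀ a, b ≤ a →
      Set.EqOn (fun τ => τ ^ p * (max (b - τ) 0) ^ n) 0 (Set.uIcc a c) := by
    intro a hba τ hτ
    have hbτ : b ≤ τ := by rcases Set.mem_uIcc.1 hτ with h | h <;> linarith [h.1]
    simp [max_eq_right (sub_nonpos.2 hbτ), hn]
  rcases le_or_gt b 0 with hb | hb
  · have hexp : p + n + 1 ≠ 0 := by linarith [n.cast_nonneg (α := ℝ)]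
    rw [intervalIntegral.integral_congr (hvanish 0 hb), max_eq_right hb, zero_rpow hexp, zero_mul,
      Pi.zero_def, intervalIntegral.integral_zero]
  · have hpositive : Set.EqOn (fun τ => τ ^ p * (max (b - τ) 0) ^ n)
        (fun τ => τ ^ p * (b - τ) ^ n) (Set.uIcc 0 b) := by
      intro τ hτ
      rw [Set.uIcc_of_le hb.le] at hτ
      simp [max_eq_left (sub_nonneg.2 hτ.2)]
    rw [← intervalIntegral.integral_add_adjacent_intervals
        (intervalIntegrable_rpow_mul_max_sub_pow hp n b 0 b)
        (intervalIntegrable_rpow_mul_max_sub_pow hp n b b c),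
      intervalIntegral.integral_congr (hvanish b le_rfl), intervalIntegral.integral_congr hpositive,
      Pi.zero_def, intervalIntegral.integral_zero, add_zero, integral_rpow_mul_pow_sub p n hb,
      max_eq_left hb.le]

lemma max_one_sub_div_eq {x : ℝ} (hx : 0 < x) (m : ℝ) :
    max (1 - m / x) 0 = max (x - m) 0 / x := by
  rw [← max_div_div_right hx.le, sub_div, div_self hx.ne', zero_div]

lemma tsum_rpow_max_one_sub_div {x : ℝ} (hx : 0 < x) {N : ℕ} (hN : x ≤ ((N : ℝ) + 1) ^ 2)
    {p : ℝ} (hp : p ≠ 0) :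
    ∑' k : ℕ, (max (1 - ((k : ℝ) + 1) ^ 2 / x) 0) ^ p
      = (∑ k ∈ Finset.range N, (max (x - ((k : ℝ) + 1) ^ 2) 0) ^ p) / x ^ p := by
  have hvanish : ∀ k ∉ Finset.range N, (max (1 - ((k : ℝ) + 1) ^ 2 / x) 0) ^ p = 0 := by
    intro k hk
    have hNk : (N : ℝ) + 1 ≤ (k : ℝ) + 1 := by
      exact_mod_cast Nat.succ_le_succ (not_lt.1 (Finset.mem_range.not.1 hk))
    have hxk : x ≤ ((k : ℝ) + 1) ^ 2 := hN.trans (pow_le_pow_left₀ (by positivity) hNk 2)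
    rw [max_one_sub_div_eq hx, max_eq_right (sub_nonpos.2 hxk), zero_div, zero_rpow hp]
  rw [tsum_eq_sum hvanish, Finset.sum_div]
  refine Finset.sum_congr rfl fun k _ => ?_
  rw [max_one_sub_div_eq hx, div_rpow (le_max_right _ _) hx.le]

/-- The Aizenman–Lieb identity reducing a Riesz mean of order `μ > 3` to
Riesz means of order `3`. -/
theorem aizenman_lieb_identity (μ A : ℝ) (hμ : 3 < μ) (hA : 1 ≤ A) :
    (∑' k : ℕ, (max (1 - ((k : ℝ) + 1) ^ 2 / A ^ 2) 0) ^ μ)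
      = 1 / (A ^ (2 * μ) * eulerBeta 4 (μ - 3)) *
        ∫ τ in (0:ℝ)..(A ^ 2 - 1), τ ^ (μ - 4) * (A ^ 2 - τ) ^ 3 *
          ∑' k : ℕ, (max (1 - ((k : ℝ) + 1) ^ 2 / (A ^ 2 - τ)) 0) ^ (3:ℝ) := by
  set N := ⌊A⌋₊
  have hN : A ^ 2 ≤ ((N : ℝ) + 1) ^ 2 :=
    pow_le_pow_left₀ (by linarith) (Nat.lt_floor_add_one A).le 2
  have hA2 : 1 ≤ A ^ 2 := one_le_pow₀ hA
  have hp : -1 < μ - 4 := by linarith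
  have hintegrand : Set.EqOn
      (fun τ => τ ^ (μ - 4) * (A ^ 2 - τ) ^ 3 *
        ∑' k : ℕ, (max (1 - ((k : ℝ) + 1) ^ 2 / (A ^ 2 - τ)) 0) ^ (3:ℝ))
      (fun τ => ∑ k ∈ Finset.range N,
        τ ^ (μ - 4) * (max ((A ^ 2 - ((k : ℝ) + 1) ^ 2) - τ) 0) ^ 3)
      (Set.uIcc 0 (A ^ 2 - 1)) := by
    intro τ hτ
    rw [Set.uIcc_of_le (by linarith)] at hτ
    have hx : 0 < A ^ 2 - τ := by linarith [hτ.2]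
    dsimp only
    rw [tsum_rpow_max_one_sub_div hx ((sub_le_self _ hτ.1).trans hN) three_ne_zero, rpow_ofNat,
      mul_assoc, mul_div_cancel₀ _ (by positivity), Finset.mul_sum]
    simp only [rpow_ofNat, sub_right_comm _ τ]
  have hexp : μ - 4 + ((3 : ℕ) : ℝ) + 1 = μ := by push_cast; ring
  have hbeta : eulerBeta (μ - 4 + 1) ((3 : ℕ) + 1) = eulerBeta 4 (μ - 3) := by
    rw [eulerBeta_comm]; norm_num; ring_nf
  have hpow : A ^ (2 * μ) = (A ^ 2) ^ μ := by
    rw [rpow_mul (by linarith), rpow_two]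
  have hbeta_pos : 0 < eulerBeta 4 (μ - 3) :=
    hbeta ▸ eulerBeta_natCast_add_one_pos (by linarith) 3
  rw [tsum_rpow_max_one_sub_div (by linarith) hN (by linarith),
    intervalIntegral.integral_congr hintegrand, intervalIntegral.integral_finsetSum
      fun k _ => intervalIntegrable_rpow_mul_max_sub_pow hp 3 _ 0 (A ^ 2 - 1),
    Finset.sum_congr rfl fun k _ => integral_rpow_mul_max_sub_pow hp three_ne_zero
      (sub_le_sub_left (one_le_pow₀ (le_add_of_nonneg_left k.cast_nonneg)) _),
    ← Finset.sum_mul, hexp, hbeta, hpow]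
  field_simp
end

section
/- Let 0 < λ₁ ≤ λ₂ ≤ … satisfy ∑_k e^{-λ_k t} < ∞ for all t > 0, set R_σ(Λ) = ∑_k (Λ−λ_k)₊^σ, and suppose for some constants C > 0, a > 0, σ ≥ 1 that R_σ(Λ) ≤ C·Λ^{σ+a} for all Λ > 0. Then for every λ with 0 ≤ λ ≤ λ₁ and every t > 0, ∑_k e^{-λ_k t} ≤ (C/(Γ(σ+1) t^a)) · Γ(σ+a+1) · Γ̂(σ+a+1, λt), where Γ̂(z,s) = (∫_s^∞ u^{z-1} e^{-u} du)/Γ(z) is the normalized upper incomplete Gamma function. -/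
/-!
For `c ≤ λₖ` the substitution `Λ = λₖ + x` gives
`∫_c^∞ (Λ - λₖ)₊^σ e^{-Λt} dΛ = Γ(σ+1) e^{-λₖt} / t^{σ+1}`, so summing over `k` writes
`Γ(σ+1) t^{-σ-1} ∑ₖ e^{-λₖt}` as `∫_c^∞ R_σ(Λ) e^{-Λt} dΛ` for any `c ≤ λ₁`. Taking `c = λ`,
inserting `R_σ(Λ) ≤ C Λ^{σ+a}` and substituting `u = Λt` leaves an upper incomplete Gamma integral.
-/

open MeasureTheory Real

/-- Normalized upper incomplete Gamma function `Γ̂(z,s)`. -/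
noncomputable def upperGamma (z s : ℝ) : ℝ :=
  (∫ u in Set.Ioi s, u ^ (z - 1) * Real.exp (-u)) / Real.Gamma z

open Set

noncomputable def rieszMean {ι : Type*} (lam : ι → ℝ) (σ Λ : ℝ) : ℝ :=
  ∑' k, max (Λ - lam k) 0 ^ σ

lemma integral_Ioi_rpow_mul_exp_neg_mul {c s t : ℝ} (hs : -1 < s) (hc : 0 ≤ c) (ht : 0 < t) :
    ∫ x in Ioi c, x ^ s * exp (-x * t)
      = Gamma (s + 1) * upperGamma (s + 1) (c * t) / t ^ (s + 1) := by
  have hΓ : Gamma (s + 1) ≠ 0 := (Gamma_pos_of_pos (by linarith)).ne'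
  have hscale : ∀ x ∈ Ioi c,
      x ^ s * exp (-x * t) = t ^ (-s) * ((x * t) ^ s * exp (-(x * t))) := by
    intro x hx
    rw [mul_rpow (hc.trans hx.le) ht.le, rpow_neg ht.le, neg_mul]
    field_simp
  rw [setIntegral_congr_fun measurableSet_Ioi hscale, integral_const_mul,
    integral_comp_mul_right_Ioi (fun u => u ^ s * exp (-u)) c ht, upperGamma,
    add_sub_cancel_right, smul_eq_mul, mul_div_cancel₀ _ hΓ, rpow_add ht, rpow_neg ht.le,
    rpow_one]
  field_simp

lemma integrableOn_Ioi_rpow_mul_exp_neg_mul {c s t : ℝ} (hs : -1 < s) (hc : 0 ≤ c)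
    (ht : 0 < t) : IntegrableOn (fun x => x ^ s * exp (-x * t)) (Ioi c) := by
  refine ((integrableOn_rpow_mul_exp_neg_mul_rpow hs one_pos ht).congr_fun (fun x _ => ?_)
    measurableSet_Ioi).mono_set (Ioi_subset_Ioi hc)
  simp only [rpow_one, neg_mul, mul_comm t]

lemma integral_Ioi_max_sub_rpow_mul_exp_neg_mul {b c σ t : ℝ} (hσ : 0 < σ) (hcb : c ≤ b)
    (ht : 0 < t) :
    ∫ Λ in Ioi c, max (Λ - b) 0 ^ σ * exp (-Λ * t)
      = exp (-b * t) * (Gamma (σ + 1) / t ^ (σ + 1)) := by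
  set g := fun Λ : ℝ => max (Λ - b) 0 ^ σ * exp (-Λ * t)
  have hg : ∀ Λ ≤ b, g Λ = 0 := fun Λ h => by
    simp [g, max_eq_right (sub_nonpos.2 h), zero_rpow hσ.ne']
  calc ∫ Λ in Ioi c, g Λ = ∫ Λ, g Λ :=
        setIntegral_eq_integral_of_forall_compl_eq_zero fun Λ h =>
          hg Λ (by rw [mem_Ioi, not_lt] at h; linarith)
    _ = ∫ x, g (x + b) := (integral_add_right_eq_self g b).symm
    _ = ∫ x in Ioi 0, g (x + b) :=
        (setIntegral_eq_integral_of_forall_compl_eq_zero fun x h =>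
          hg _ (by rw [mem_Ioi, not_lt] at h; linarith)).symm
    _ = ∫ x in Ioi 0, exp (-b * t) * (x ^ (σ + 1 - 1) * exp (-(t * x))) := by
        refine setIntegral_congr_fun measurableSet_Ioi fun x hx => ?_
        simp only [g, add_sub_cancel_right, max_eq_left (mem_Ioi.mp hx).le]
        rw [show -(x + b) * t = -b * t + -(t * x) by ring, exp_add]
        ring
    _ = _ := by
        rw [integral_const_mul, integral_rpow_mul_exp_neg_mul_Ioi (by linarith) ht, one_div,
          inv_rpow ht.le, div_eq_inv_mul]

lemma integral_rieszMean_mul_exp_neg_mul {ι : Type*} [Countable ι] {lam : ι → ℝ} {c σ t : ℝ}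
    (hσ : 0 < σ) (ht : 0 < t) (hc : ∀ k, c ≤ lam k) (hsum : Summable fun k => exp (-lam k * t)) :
    ∫ Λ in Ioi c, rieszMean lam σ Λ * exp (-Λ * t)
      = Gamma (σ + 1) / t ^ (σ + 1) * ∑' k, exp (-lam k * t) := by
  set F : ι → ℝ → ℝ := fun k Λ => max (Λ - lam k) 0 ^ σ * exp (-Λ * t)
  have hF : ∀ k, ∫ Λ in Ioi c, F k Λ = exp (-lam k * t) * (Gamma (σ + 1) / t ^ (σ + 1)) :=
    fun k => integral_Ioi_max_sub_rpow_mul_exp_neg_mul hσ (hc k) ht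
  -- a nonintegrable function would have Bochner integral `0`
  have hF_int : ∀ k, IntegrableOn (F k) (Ioi c) := fun k =>
    Integrable.of_integral_ne_zero (by rw [hF k]; positivity)
  have hF_norm : ∀ k, ∫ Λ in Ioi c, ‖F k Λ‖ = ∫ Λ in Ioi c, F k Λ := fun k =>
    integral_congr_ae (ae_of_all _ fun Λ => norm_of_nonneg (by positivity))
  have hswap := integral_tsum_of_summable_integral_norm hF_int
    (by simpa only [hF_norm, hF] using hsum.mul_right _)
  simp only [rieszMean, ← tsum_mul_right]
  rw [← hswap, mul_comm, ← tsum_mul_right]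
  exact tsum_congr hF

lemma integral_Ioi_mul_exp_neg_mul_le_of_le_rpow {f : ℝ → ℝ} {c s t C : ℝ} (hs : -1 < s)
    (hc : 0 ≤ c) (ht : 0 < t) (hf_nonneg : ∀ Λ ∈ Ioi c, 0 ≤ f Λ)
    (hf_le : ∀ Λ ∈ Ioi c, f Λ ≤ C * Λ ^ s) :
    ∫ Λ in Ioi c, f Λ * exp (-Λ * t)
      ≤ C * (Gamma (s + 1) * upperGamma (s + 1) (c * t) / t ^ (s + 1)) := by
  rw [← integral_Ioi_rpow_mul_exp_neg_mul hs hc ht, ← integral_const_mul]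
  have hint := (integrableOn_Ioi_rpow_mul_exp_neg_mul hs hc ht).const_mul C
  refine integral_mono_of_nonneg ?_ hint ?_ <;>
    refine (ae_restrict_iff' measurableSet_Ioi).2 (ae_of_all _ fun Λ hΛ => ?_)
  · exact mul_nonneg (hf_nonneg Λ hΛ) (exp_pos _).le
  · simpa only [mul_assoc] using mul_le_mul_of_nonneg_right (hf_le Λ hΛ) (exp_pos (-Λ * t)).le

theorem heat_trace_bound_of_riesz_bound_general (lam : ℕ → ℝ)
    (hmono : Monotone lam)
    (hsum : ∀ t : ℝ, 0 < t → Summable fun k => Real.exp (-lam k * t))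
    (C a σ : ℝ) (ha : 0 < a) (hσ : 1 ≤ σ)
    (hR : ∀ Λ : ℝ, 0 < Λ → (∑' k : ℕ, (max (Λ - lam k) 0) ^ σ) ≤ C * Λ ^ (σ + a))
    (lam₀ t : ℝ) (hlam₀ : 0 ≤ lam₀) (hlam₁ : lam₀ ≤ lam 0) (ht : 0 < t) :
    (∑' k : ℕ, Real.exp (-lam k * t))
      ≤ C / (Real.Gamma (σ + 1) * t ^ a) * Real.Gamma (σ + a + 1)
          * upperGamma (σ + a + 1) (lam₀ * t) := by
  have hbound : Gamma (σ + 1) / t ^ (σ + 1) * ∑' k, exp (-lam k * t)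
      ≤ C * (Gamma (σ + a + 1) * upperGamma (σ + a + 1) (lam₀ * t) / t ^ (σ + a + 1)) := by
    rw [← integral_rieszMean_mul_exp_neg_mul (by linarith) ht
      (fun k => hlam₁.trans (hmono k.zero_le)) (hsum t ht)]
    exact integral_Ioi_mul_exp_neg_mul_le_of_le_rpow (by linarith) hlam₀ ht
      (fun Λ _ => tsum_nonneg fun k => by positivity) (fun Λ hΛ => hR Λ (hlam₀.trans_lt hΛ))
  have htpow : t ^ (σ + a + 1) = t ^ (σ + 1) * t ^ a := by
    rw [← rpow_add ht]; ring_nf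
  have hK : 0 < Gamma (σ + 1) / t ^ (σ + 1) := by positivity
  refine le_of_mul_le_mul_left (hbound.trans_eq ?_) hK
  rw [htpow]
  field_simp

/-- From a Berezin–Li–Yau type bound `R_σ(Λ) ≤ C Λ^{σ+a}` one deduces an
exponentially decaying bound on the heat trace. -/
theorem heat_trace_bound_of_riesz_bound (lam : ℕ → ℝ) (hpos : 0 < lam 0)
    (hmono : Monotone lam)
    (hsum : ∀ t : ℝ, 0 < t → Summable fun k => Real.exp (-lam k * t))
    (C a σ : ℝ) (hC : 0 < C) (ha : 0 < a) (hσ : 1 ≤ σ)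
    (hR : ∀ Λ : ℝ, 0 < Λ → (∑' k : ℕ, (max (Λ - lam k) 0) ^ σ) ≤ C * Λ ^ (σ + a))
    (lam₀ t : ℝ) (hlam₀ : 0 ≤ lam₀) (hlam₁ : lam₀ ≤ lam 0) (ht : 0 < t) :
    (∑' k : ℕ, Real.exp (-lam k * t))
      ≤ C / (Real.Gamma (σ + 1) * t ^ a) * Real.Gamma (σ + a + 1)
          * upperGamma (σ + a + 1) (lam₀ * t) :=
  heat_trace_bound_of_riesz_bound_general lam hmono hsum C a σ ha hσ hR lam₀ t hlam₀ hlam₁ ht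
end

section
/- Let Ω_f = {(x,y) ∈ ℝ² : x > 0, 0 < y < f(x)} with f(s) = s^{-1/μ} for some μ > 0, and consider coordinates (x₁,x₂) rotated by π/4 relative to (x,y). Then the section length function p₂(x₁) = |{x₂ : (x₁,x₂) ∈ Ω_f}|₁ satisfies p₂(x₁) ≤ √2 · f(√2 x₁) for x₁ > 0, p₂(0) ≤ √2, and p₂(x₁) ≤ √2 · f^{-1}(√2 |x₁|) for x₁ < 0; consequently the distribution function satisfies m₂(τ; Ω_f) ≤ 2^{(μ−1)/2} τ^{−μ} + 2^{(1−μ)/(2μ)} τ^{−1/μ} for 0 < τ < √2 and m₂(τ;Ω_f) = 0 for τ ≥ √2. -/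
open MeasureTheory Real

/-- The horn-shaped region `Ω_f = {(x,y) : x > 0, 0 < y < x^{-1/μ}}`. -/
def horn (μ : ℝ) : Set (ℝ × ℝ) :=
  {p : ℝ × ℝ | 0 < p.1 ∧ 0 < p.2 ∧ p.2 < p.1 ^ (-(1 : ℝ) / μ)}

/-- Section length of the horn in coordinates rotated by `π/4`:
`p₂(x₁) = |{x₂ : (x₁,x₂) ∈ Ω_f (rotated)}|₁`. -/
noncomputable def hornSection (μ x₁ : ℝ) : ENNReal :=
  volume {x₂ : ℝ | ((x₁ + x₂) / Real.sqrt 2, (x₂ - x₁) / Real.sqrt 2) ∈ horn μ}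

/-- inversion: `a < b ^ (-c)` iff `b < a ^ (-c⁻¹)` for positive reals. -/
lemma horn_aux_inv {a b c : ℝ} (ha : 0 < a) (hb : 0 < b) (hc : 0 < c) :
    a < b ^ (-c) ↔ b < a ^ (-c⁻¹) := by
  rw [Real.lt_rpow_iff_log_lt ha hb, Real.lt_rpow_iff_log_lt hb ha]
  have h2 : (0:ℝ) < c⁻¹ := inv_pos.mpr hc
  constructor
  · intro h
    have h3 := mul_lt_mul_of_pos_left h h2
    have h4 : c⁻¹ * (-c * Real.log b) = -Real.log b := by field_simp
    linarith
  · intro h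
    have h3 := mul_lt_mul_of_pos_left h hc
    have h4 : c * (-c⁻¹ * Real.log a) = -Real.log a := by field_simp
    linarith

lemma horn_sec_le {μ x₁ a b : ℝ}
    (h : {x₂ : ℝ | ((x₁ + x₂) / Real.sqrt 2, (x₂ - x₁) / Real.sqrt 2) ∈ horn μ}
        ⊆ Set.Ioo a b) :
    hornSection μ x₁ ≤ ENNReal.ofReal (b - a) := by
  calc hornSection μ x₁ ≤ volume (Set.Ioo a b) := measure_mono h
    _ = ENNReal.ofReal (b - a) := Real.volume_Ioo

lemma horn_s2_pos : (0:ℝ) < Real.sqrt 2 := Real.sqrt_pos.mpr (by norm_num)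

lemma horn_sec_le_sqrt2 (μ : ℝ) (hμ : 0 < μ) (x₁ : ℝ) :
    hornSection μ x₁ ≤ ENNReal.ofReal (Real.sqrt 2) := by
  have hs2 := horn_s2_pos
  have hsq : Real.sqrt 2 * Real.sqrt 2 = 2 := Real.mul_self_sqrt (by norm_num)
  have h := horn_sec_le (μ := μ) (x₁ := x₁) (a := |x₁|) (b := |x₁| + Real.sqrt 2) ?_
  · simpa using h
  · rintro x₂ ⟨hX, hY, hlt⟩
    have hx2 : x₁ < x₂ := by
      have := (div_pos_iff.mp hY)
      rcases this with ⟨h1, _⟩ | ⟨_, h2⟩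
      · linarith
      · linarith
    have hx2' : -x₁ < x₂ := by
      rcases div_pos_iff.mp hX with ⟨h1, _⟩ | ⟨_, h2⟩
      · linarith
      · linarith
    refine ⟨abs_lt.mpr ⟨by linarith, hx2⟩, ?_⟩
    by_contra hcon
    push_neg at hcon
    have habs : -x₁ ≤ |x₁| := neg_le_abs x₁
    have habs' : x₁ ≤ |x₁| := le_abs_self x₁
    have hX1 : (1:ℝ) ≤ (x₁ + x₂) / Real.sqrt 2 := by
      rw [le_div_iff₀ hs2]
      nlinarith
    have hY1 : (1:ℝ) ≤ (x₂ - x₁) / Real.sqrt 2 := by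
      rw [le_div_iff₀ hs2]
      nlinarith
    have : ((x₁ + x₂) / Real.sqrt 2) ^ (-(1:ℝ)/μ) ≤ 1 :=
      Real.rpow_le_one_of_one_le_of_nonpos hX1
        (by rw [neg_div]; exact neg_nonpos.mpr (by positivity))
    linarith

lemma horn_sec_pos_bound (μ : ℝ) (hμ : 0 < μ) (x₁ : ℝ) (hx : 0 < x₁) :
    hornSection μ x₁ ≤ ENNReal.ofReal (Real.sqrt 2 * (Real.sqrt 2 * x₁) ^ (-(1 : ℝ) / μ)) := by
  have hs2 := horn_s2_pos
  have hsq : Real.sqrt 2 * Real.sqrt 2 = 2 := Real.mul_self_sqrt (by norm_num)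
  have h := horn_sec_le (μ := μ) (x₁ := x₁) (a := x₁)
    (b := x₁ + Real.sqrt 2 * (Real.sqrt 2 * x₁) ^ (-(1 : ℝ) / μ)) ?_
  · simpa using h
  · rintro x₂ ⟨hX, hY, hlt⟩
    have hx2 : x₁ < x₂ := by
      rcases div_pos_iff.mp hY with ⟨h1, _⟩ | ⟨_, h2⟩
      · linarith
      · linarith
    refine ⟨hx2, ?_⟩
    have hXge : Real.sqrt 2 * x₁ ≤ (x₁ + x₂) / Real.sqrt 2 := by
      rw [le_div_iff₀ hs2]
      nlinarith
    have hmono : ((x₁ + x₂) / Real.sqrt 2) ^ (-(1:ℝ)/μ) ≤ (Real.sqrt 2 * x₁) ^ (-(1:ℝ)/μ) :=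
      Real.rpow_le_rpow_of_nonpos (by positivity) hXge
        (by rw [neg_div]; exact neg_nonpos.mpr (by positivity))
    have hYlt : (x₂ - x₁) / Real.sqrt 2 < (Real.sqrt 2 * x₁) ^ (-(1:ℝ)/μ) :=
      lt_of_lt_of_le hlt hmono
    rw [div_lt_iff₀ hs2] at hYlt
    nlinarith

lemma horn_sec_neg_bound (μ : ℝ) (hμ : 0 < μ) (x₁ : ℝ) (hx : x₁ < 0) :
    hornSection μ x₁ ≤ ENNReal.ofReal (Real.sqrt 2 * (Real.sqrt 2 * |x₁|) ^ (-μ)) := by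
  have hs2 := horn_s2_pos
  have hsq : Real.sqrt 2 * Real.sqrt 2 = 2 := Real.mul_self_sqrt (by norm_num)
  have habs : |x₁| = -x₁ := abs_of_neg hx
  have h := horn_sec_le (μ := μ) (x₁ := x₁) (a := -x₁)
    (b := -x₁ + Real.sqrt 2 * (Real.sqrt 2 * |x₁|) ^ (-μ)) ?_
  · simpa using h
  · rintro x₂ ⟨hX, hY, hlt⟩
    have hx2 : -x₁ < x₂ := by
      rcases div_pos_iff.mp hX with ⟨h1, _⟩ | ⟨_, h2⟩
      · linarith
      · linarith
    refine ⟨hx2, ?_⟩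
    have hYpos : 0 < (x₂ - x₁) / Real.sqrt 2 := hY
    have hXpos : 0 < (x₁ + x₂) / Real.sqrt 2 := hX
    -- from y < x^{-1/μ} deduce x < y^{-μ}
    have hinv : (x₁ + x₂) / Real.sqrt 2 < ((x₂ - x₁) / Real.sqrt 2) ^ (-μ) := by
      have h1 : (x₂ - x₁) / Real.sqrt 2 < ((x₁ + x₂) / Real.sqrt 2) ^ (-(1/μ)) := by
        rw [show -(1/μ) = -(1:ℝ)/μ by ring]
        exact hlt
      have := (horn_aux_inv hYpos hXpos (by positivity : (0:ℝ) < 1/μ)).mp h1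
      rwa [show ((1:ℝ)/μ)⁻¹ = μ by field_simp] at this
    have hYge : Real.sqrt 2 * |x₁| ≤ (x₂ - x₁) / Real.sqrt 2 := by
      rw [le_div_iff₀ hs2, habs]
      nlinarith
    have habs0 : (0:ℝ) < |x₁| := abs_pos.mpr hx.ne
    have hmono : ((x₂ - x₁) / Real.sqrt 2) ^ (-μ) ≤ (Real.sqrt 2 * |x₁|) ^ (-μ) :=
      Real.rpow_le_rpow_of_nonpos (mul_pos hs2 habs0) hYge
        (neg_nonpos.mpr hμ.le)
    have : (x₁ + x₂) / Real.sqrt 2 < (Real.sqrt 2 * |x₁|) ^ (-μ) := lt_of_lt_of_le hinv hmono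
    rw [div_lt_iff₀ hs2] at this
    nlinarith

/-- algebra: `(τ/√2)^(-e) / √2 = 2^(e/2 - 1/2) * τ^(-e)` -/
lemma horn_alg (e τ : ℝ) (hτ : 0 < τ) :
    (τ / Real.sqrt 2) ^ (-e) / Real.sqrt 2 = (2:ℝ) ^ (e/2 - 1/2) * τ ^ (-e) := by
  have hs2 := horn_s2_pos
  have h2 : Real.sqrt 2 = (2:ℝ) ^ ((1:ℝ)/2) := Real.sqrt_eq_rpow 2
  rw [Real.div_rpow hτ.le hs2.le, h2, ← Real.rpow_mul (by norm_num),
    div_div, ← Real.rpow_add (by norm_num : (0:ℝ) < 2)]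
  rw [div_eq_mul_inv, ← Real.rpow_neg (by norm_num : (0:ℝ) ≤ 2), mul_comm]
  congr 1
  ring

/-- Bounds on the rotated section lengths and the distribution function of a
horn-shaped region with `f(s) = s^{-1/μ}`. -/
theorem horn_section_bounds (μ : ℝ) (hμ : 0 < μ) :
    (∀ x₁ : ℝ, 0 < x₁ →
        hornSection μ x₁ ≤ ENNReal.ofReal (Real.sqrt 2 * (Real.sqrt 2 * x₁) ^ (-(1 : ℝ) / μ)))
    ∧ hornSection μ 0 ≤ ENNReal.ofReal (Real.sqrt 2)
    ∧ (∀ x₁ : ℝ, x₁ < 0 →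
        hornSection μ x₁ ≤ ENNReal.ofReal (Real.sqrt 2 * (Real.sqrt 2 * |x₁|) ^ (-μ)))
    ∧ (∀ τ : ℝ, 0 < τ → τ < Real.sqrt 2 →
        volume {x₁ : ℝ | ENNReal.ofReal τ < hornSection μ x₁}
          ≤ ENNReal.ofReal ((2 : ℝ) ^ ((μ - 1) / 2) * τ ^ (-μ)
              + (2 : ℝ) ^ ((1 - μ) / (2 * μ)) * τ ^ (-(1 : ℝ) / μ)))
    ∧ (∀ τ : ℝ, Real.sqrt 2 ≤ τ →
        volume {x₁ : ℝ | ENNReal.ofReal τ < hornSection μ x₁} = 0) := by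
  have hs2 := horn_s2_pos
  refine ⟨horn_sec_pos_bound μ hμ, horn_sec_le_sqrt2 μ hμ 0, horn_sec_neg_bound μ hμ, ?_, ?_⟩
  · intro τ hτ hτ2
    set A : ℝ := (2 : ℝ) ^ ((μ - 1) / 2) * τ ^ (-μ) with hA
    set B : ℝ := (2 : ℝ) ^ ((1 - μ) / (2 * μ)) * τ ^ (-(1 : ℝ) / μ) with hB
    have hApos : 0 < A := by positivity
    have hBpos : 0 < B := by positivity
    have hAeq : (τ / Real.sqrt 2) ^ (-μ) / Real.sqrt 2 = A := by
      rw [horn_alg μ τ hτ, hA, show (μ - 1)/2 = μ/2 - 1/2 by ring]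
    have hBeq : (τ / Real.sqrt 2) ^ (-(1/μ)) / Real.sqrt 2 = B := by
      rw [horn_alg (1/μ) τ hτ, hB, show -((1:ℝ)/μ) = -(1:ℝ)/μ by ring,
        show (1/μ)/2 - 1/2 = (1 - μ)/(2*μ) by field_simp]
    have hsub : {x₁ : ℝ | ENNReal.ofReal τ < hornSection μ x₁} ⊆ Set.Icc (-B) A := by
      intro x₁ hx₁
      simp only [Set.mem_setOf_eq] at hx₁
      rcases lt_trichotomy x₁ 0 with hneg | hzero | hpos
      · -- negative case
        have hle := horn_sec_neg_bound μ hμ x₁ hneg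
        have hlt := lt_of_lt_of_le hx₁ hle
        rw [ENNReal.ofReal_lt_ofReal_iff_of_nonneg hτ.le] at hlt
        have h1 : τ / Real.sqrt 2 < (Real.sqrt 2 * |x₁|) ^ (-μ) := by
          rw [div_lt_iff₀ hs2]
          nlinarith [Real.rpow_pos_of_pos (mul_pos hs2 (abs_pos.mpr hneg.ne)) (-μ)]
        have habs0 : (0:ℝ) < |x₁| := abs_pos.mpr hneg.ne
        have h2 : Real.sqrt 2 * |x₁| < (τ / Real.sqrt 2) ^ (-μ⁻¹) :=
          (horn_aux_inv (by positivity) (mul_pos hs2 habs0) hμ).mp h1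
        rw [show -μ⁻¹ = -(1/μ) by rw [one_div]] at h2
        have h3 : |x₁| < B := by
          rw [← hBeq, lt_div_iff₀ hs2]
          nlinarith
        constructor
        · have := neg_abs_le x₁
          linarith [abs_of_neg hneg ▸ h3]
        · linarith [abs_nonneg x₁, le_abs_self x₁]
      · subst hzero
        exact ⟨by linarith, hApos.le⟩
      · -- positive case
        have hle := horn_sec_pos_bound μ hμ x₁ hpos
        have hlt := lt_of_lt_of_le hx₁ hle
        rw [ENNReal.ofReal_lt_ofReal_iff_of_nonneg hτ.le] at hlt
        have h1 : τ / Real.sqrt 2 < (Real.sqrt 2 * x₁) ^ (-(1/μ)) := by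
          rw [div_lt_iff₀ hs2, show -(1/μ) = -(1:ℝ)/μ by ring]
          nlinarith [Real.rpow_pos_of_pos (show (0:ℝ) < Real.sqrt 2 * x₁ by positivity)
            (-(1:ℝ)/μ)]
        have h2 : Real.sqrt 2 * x₁ < (τ / Real.sqrt 2) ^ (-((1/μ):ℝ)⁻¹) :=
          (horn_aux_inv (by positivity) (by positivity) (by positivity)).mp h1
        rw [show ((1/μ):ℝ)⁻¹ = μ by field_simp] at h2
        have h3 : x₁ < A := by
          rw [← hAeq, lt_div_iff₀ hs2]
          nlinarith
        exact ⟨by linarith, h3.le⟩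
    calc volume {x₁ : ℝ | ENNReal.ofReal τ < hornSection μ x₁}
        ≤ volume (Set.Icc (-B) A) := measure_mono hsub
      _ = ENNReal.ofReal (A - (-B)) := Real.volume_Icc
      _ = ENNReal.ofReal (A + B) := by ring_nf
  · intro τ hτ
    have : {x₁ : ℝ | ENNReal.ofReal τ < hornSection μ x₁} = ∅ := by
      ext x₁
      simp only [Set.mem_setOf_eq, Set.mem_empty_iff_false, iff_false, not_lt]
      exact le_trans (horn_sec_le_sqrt2 μ hμ x₁) (ENNReal.ofReal_le_ofReal hτ)
    rw [this, measure_empty]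
end
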